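/- arXiv:2603.09450 — 4 statements merged into one kernel-verified Lean document; each statement's English description precedes it below -/
import Mathlib

section
/- Let M be a strictly positive n×n matrix. The set Θ = {c ∈ R^n : c > 0, c_1 = 1, c^T(I−M) ≥ 0} has nonempty interior (i.e., there exists c > 0 with c_1 = 1 and c^T(I−M) > 0 componentwise) if and only if the Perron eigenvalue of M is strictly less than 1. -/
open Matrix

/-- For a strictly positive matrix `M` with Perron eigenvalue `lam`
(witnessed by strictly positive left and right eigenvectors), the feasible
set `Θ = {c > 0 : c₁ = 1, cᵀ(I − M) ≥ 0}` has nonempty interior (there is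
`c > 0` with `c₁ = 1` and `cᵀ(I − M) > 0` componentwise) iff `lam < 1`. -/
theorem feasible_interior_iff_perron_lt_one {n : ℕ} [NeZero n]
    (M : Matrix (Fin n) (Fin n) ℝ) (lam : ℝ) (y x : Fin n → ℝ)
    (hM : ∀ i j, 0 < M i j)
    (hy : ∀ i, 0 < y i) (hx : ∀ i, 0 < x i)
    (hyM : Matrix.vecMul y M = lam • y)
    (hxM : M.mulVec x = lam • x) :
    (∃ c : Fin n → ℝ, (∀ i, 0 < c i) ∧ c 0 = 1 ∧
        ∀ j, 0 < Matrix.vecMul c (1 - M) j) ↔ lam < 1 := by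
  constructor
  · rintro ⟨c, hc, -, hpos⟩
    have hcx : 0 < c ⬝ᵥ x := by
      apply Finset.sum_pos
      · intro i _
        exact mul_pos (hc i) (hx i)
      · exact Finset.univ_nonempty
    have hs : 0 < (Matrix.vecMul c (1 - M)) ⬝ᵥ x := by
      apply Finset.sum_pos
      · intro i _
        exact mul_pos (hpos i) (hx i)
      · exact Finset.univ_nonempty
    have key : (Matrix.vecMul c (1 - M)) ⬝ᵥ x = (1 - lam) * (c ⬝ᵥ x) := by
      rw [← Matrix.dotProduct_mulVec, Matrix.sub_mulVec, Matrix.one_mulVec, hxM,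
        dotProduct_sub, dotProduct_smul]
      simp only [smul_eq_mul]
      ring
    rw [key] at hs
    rcases mul_pos_iff.mp hs with ⟨h1, -⟩ | ⟨-, h2⟩
    · linarith
    · linarith
  · intro hlam
    refine ⟨(y 0)⁻¹ • y, ?_, ?_, ?_⟩
    · intro i
      exact mul_pos (inv_pos.mpr (hy 0)) (hy i)
    · simp [inv_mul_cancel₀ (hy 0).ne']
    · intro j
      have h1 : Matrix.vecMul ((y 0)⁻¹ • y) (1 - M) j
          = (y 0)⁻¹ * ((1 - lam) * y j) := by
        rw [Matrix.smul_vecMul, Matrix.vecMul_sub, Matrix.vecMul_one, hyM]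
        simp only [Pi.smul_apply, Pi.sub_apply, smul_eq_mul]
        ring
      rw [h1]
      have := hy j
      have := hy 0
      have h2 : 0 < 1 - lam := by linarith
      positivity
end

section
/- For a productive economy the following are equivalent: (i) there exists h > 0 with M_0 h < h where M_0 = L(I−A)^{-1}B; (ii) there exists u > 0 with (A + BL)u < u. Consequently ρ(M_0) < 1 if and only if ρ(A + BL) < 1. -/
open Matrix

/-- Spectral radius of a real square matrix, via its complex spectrum. -/
noncomputable def specRad {n : ℕ} (A : Matrix (Fin n) (Fin n) ℝ) : ℝ :=
  sSup {r : ℝ | ∃ μ ∈ spectrum ℂ (A.map (algebraMap ℝ ℂ)), r = ‖μ‖}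

/-- Irreducibility: the directed graph of `A` is strongly connected. -/
def MatIrreducible {n : ℕ} (A : Matrix (Fin n) (Fin n) ℝ) : Prop :=
  ∀ i j, ∃ k : ℕ, 0 < k ∧ 0 < (A ^ k) i j

open Finset Filter
open scoped ENNReal NNReal

lemma mem_spectrum_iff_eig {n : ℕ} (M : Matrix (Fin n) (Fin n) ℂ) (μ : ℂ) :
    μ ∈ spectrum ℂ M ↔ ∃ x : Fin n → ℂ, x ≠ 0 ∧ M.mulVec x = μ • x := by
  rw [spectrum.mem_iff]
  rw [Matrix.isUnit_iff_isUnit_det, isUnit_iff_ne_zero, not_not,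
    ← Matrix.exists_mulVec_eq_zero_iff]
  constructor
  · rintro ⟨v, hv, h⟩
    refine ⟨v, hv, ?_⟩
    have := h
    rw [Algebra.algebraMap_eq_smul_one, Matrix.sub_mulVec, Matrix.smul_mulVec,
      Matrix.one_mulVec, sub_eq_zero] at this
    exact this.symm
  · rintro ⟨v, hv, h⟩
    refine ⟨v, hv, ?_⟩
    rw [Algebra.algebraMap_eq_smul_one, Matrix.sub_mulVec, Matrix.smul_mulVec,
      Matrix.one_mulVec, sub_eq_zero, h]

lemma specRad_lt_one_of_sub {n : ℕ} (N : Matrix (Fin n) (Fin n) ℝ)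
    (hN : ∀ i j, 0 ≤ N i j) (v : Fin n → ℝ) (hv : ∀ i, 0 < v i)
    (hsub : ∀ i, N.mulVec v i < v i) : specRad N < 1 := by
  rcases Nat.eq_zero_or_pos n with hn | hn
  · subst hn
    have he : {r : ℝ | ∃ μ ∈ spectrum ℂ (N.map (algebraMap ℝ ℂ)), r = ‖μ‖} = ∅ := by
      ext r
      simp only [Set.mem_setOf_eq, Set.mem_empty_iff_false, iff_false, not_exists]
      rintro μ ⟨hμ, -⟩
      exact (spectrum.mem_iff.mp hμ) (isUnit_of_subsingleton _)
    rw [specRad, he, Real.sSup_empty]; norm_num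
  · have hne : (univ : Finset (Fin n)).Nonempty := univ_nonempty_iff.mpr ⟨⟨0, hn⟩⟩
    set θ : ℝ := univ.sup' hne (fun i => N.mulVec v i / v i) with hθdef
    have hθ1 : θ < 1 := by
      apply (Finset.sup'_lt_iff hne).mpr
      intro i _
      exact (div_lt_one (hv i)).mpr (hsub i)
    have hθle : ∀ i, N.mulVec v i ≤ θ * v i := by
      intro i
      have h1 : N.mulVec v i / v i ≤ θ := Finset.le_sup' (fun i => N.mulVec v i / v i) (mem_univ i)
      calc N.mulVec v i = (N.mulVec v i / v i) * v i := (div_mul_cancel₀ _ (hv i).ne').symm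
      _ ≤ θ * v i := mul_le_mul_of_nonneg_right h1 (hv i).le
    have hθ0 : 0 ≤ θ := by
      refine le_trans ?_ (Finset.le_sup' (fun i => N.mulVec v i / v i) (mem_univ ⟨0, hn⟩))
      have h0 : (0:ℝ) ≤ N.mulVec v ⟨0, hn⟩ := by
        simp only [Matrix.mulVec, dotProduct]
        exact Finset.sum_nonneg fun j _ => mul_nonneg (hN _ j) (hv j).le
      have := hv (⟨0, hn⟩ : Fin n)
      positivity
    have key : ∀ μ ∈ spectrum ℂ (N.map (algebraMap ℝ ℂ)), ‖μ‖ ≤ θ := by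
      intro μ hμ
      obtain ⟨x, hx0, hx⟩ := (mem_spectrum_iff_eig _ μ).mp hμ
      obtain ⟨i, -, hi⟩ := Finset.exists_max_image univ (fun i => ‖x i‖ / v i) hne
      set c : ℝ := ‖x i‖ / v i with hc
      have hcle : ∀ j, ‖x j‖ ≤ c * v j := by
        intro j
        have h1 := hi j (mem_univ j)
        calc ‖x j‖ = (‖x j‖ / v j) * v j := (div_mul_cancel₀ _ (hv j).ne').symm
        _ ≤ c * v j := mul_le_mul_of_nonneg_right h1 (hv j).le
      have hcpos : 0 < c := by
        obtain ⟨j, hj⟩ := Function.ne_iff.mp hx0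
        have h2 : 0 < ‖x j‖ := by simpa [norm_pos_iff] using hj
        calc (0:ℝ) < ‖x j‖ / v j := div_pos h2 (hv j)
        _ ≤ c := hi j (mem_univ j)
      have hxi : 0 < ‖x i‖ := by
        have h3 := mul_pos hcpos (hv i)
        rwa [hc, div_mul_cancel₀ _ (hv i).ne'] at h3
      have hmain : ‖μ‖ * ‖x i‖ ≤ θ * ‖x i‖ := by
        have e1 : ‖μ‖ * ‖x i‖ = ‖(μ • x) i‖ := by
          simp [norm_smul]
        rw [e1, ← hx]
        have e2 : (N.map (algebraMap ℝ ℂ)).mulVec x i = ∑ j, (algebraMap ℝ ℂ) (N i j) * x j := by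
          simp [Matrix.mulVec, dotProduct, Matrix.map_apply]
        rw [e2]
        calc ‖∑ j, (algebraMap ℝ ℂ) (N i j) * x j‖ ≤ ∑ j, ‖(algebraMap ℝ ℂ) (N i j) * x j‖ :=
              norm_sum_le _ _
        _ = ∑ j, N i j * ‖x j‖ := by
              refine Finset.sum_congr rfl fun j _ => ?_
              rw [norm_mul]
              simp [Complex.norm_real, abs_of_nonneg (hN i j)]
        _ ≤ ∑ j, N i j * (c * v j) := by
              refine Finset.sum_le_sum fun j _ => mul_le_mul_of_nonneg_left (hcle j) (hN i j)
        _ = c * N.mulVec v i := by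
              simp only [Matrix.mulVec, dotProduct, Finset.mul_sum]
              exact Finset.sum_congr rfl fun j _ => by ring
        _ ≤ c * (θ * v i) := mul_le_mul_of_nonneg_left (hθle i) hcpos.le
        _ = θ * (c * v i) := by ring
        _ = θ * ‖x i‖ := by rw [hc, div_mul_cancel₀ _ (hv i).ne']
      exact le_of_mul_le_mul_right hmain hxi
    calc specRad N ≤ θ := Real.sSup_le (by rintro r ⟨μ, hμ, rfl⟩; exact key μ hμ) hθ0
    _ < 1 := hθ1

section Gelfand

attribute [local instance] Matrix.linftyOpNormedAddCommGroup Matrix.linftyOpNormedRing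
  Matrix.linftyOpNormedAlgebra Matrix.linftyOpNormedSpace

lemma entry_le_linfty {n : ℕ} (M : Matrix (Fin n) (Fin n) ℂ) (i j : Fin n) :
    ‖M i j‖ ≤ ‖M‖ := by
  have h1 : ‖M i j‖₊ ≤ ∑ j', ‖M i j'‖₊ :=
    Finset.single_le_sum (f := fun j' => ‖M i j'‖₊) (fun j' _ => zero_le) (mem_univ j)
  have h2 : (∑ j', ‖M i j'‖₊) ≤ ‖M‖₊ := by
    rw [Matrix.linfty_opNNNorm_def]
    exact Finset.le_sup (f := fun i => ∑ j', ‖M i j'‖₊) (mem_univ i)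
  exact_mod_cast h1.trans h2

lemma summable_pow_entries {n : ℕ} (N : Matrix (Fin n) (Fin n) ℝ) (hρ : specRad N < 1)
    (i j : Fin n) : Summable fun k => (N ^ k) i j := by
  haveI : Nonempty (Fin n) := ⟨i⟩
  set Nc : Matrix (Fin n) (Fin n) ℂ := N.map (algebraMap ℝ ℂ) with hNc
  have hmap : ∀ k : ℕ, Nc ^ k = (N ^ k).map (algebraMap ℝ ℂ) := by
    intro k
    rw [hNc, ← RingHom.mapMatrix_apply, ← RingHom.mapMatrix_apply, ← map_pow]
  have hbdd : BddAbove {r : ℝ | ∃ μ ∈ spectrum ℂ Nc, r = ‖μ‖} := by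
    refine ⟨‖Nc‖, ?_⟩
    rintro r ⟨μ, hμ, rfl⟩
    exact spectrum.norm_le_norm_of_mem hμ
  have hsr : spectralRadius ℂ Nc < 1 := by
    have hle : spectralRadius ℂ Nc ≤ ENNReal.ofReal (specRad N) := by
      rw [spectralRadius]
      refine iSup₂_le fun μ hμ => ?_
      have h1 : ‖μ‖ ≤ specRad N := le_csSup hbdd ⟨μ, hμ, rfl⟩
      rw [← ENNReal.ofReal_coe_nnreal, coe_nnnorm]
      exact ENNReal.ofReal_le_ofReal h1
    exact lt_of_le_of_lt hle (ENNReal.ofReal_lt_one.mpr hρ)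
  have hG := spectrum.pow_nnnorm_pow_one_div_tendsto_nhds_spectralRadius Nc
  obtain ⟨r, hr1, hr2⟩ := ENNReal.lt_iff_exists_nnreal_btwn.mp hsr
  have hr2' : (r : ℝ) < 1 := by exact_mod_cast hr2
  have hev : ∀ᶠ k : ℕ in atTop, ((‖Nc ^ k‖₊ : ℝ≥0∞)) ^ (1 / (k:ℝ)) < (r : ℝ≥0∞) :=
    hG.eventually_lt_const hr1
  have hev2 : ∀ᶠ k : ℕ in atTop, ‖(N ^ k) i j‖ ≤ (r : ℝ) ^ k := by
    filter_upwards [hev, Filter.eventually_ge_atTop 1] with k hk hk1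
    have hk0 : (k : ℝ) ≠ 0 := by positivity
    have h3 : (‖Nc ^ k‖₊ : ℝ≥0∞) < (r : ℝ≥0∞) ^ (k : ℝ) := by
      have := ENNReal.rpow_lt_rpow hk (by positivity : (0:ℝ) < (k:ℝ))
      rwa [← ENNReal.rpow_mul, one_div, inv_mul_cancel₀ hk0, ENNReal.rpow_one] at this
    have h4 : ‖Nc ^ k‖ ≤ (r : ℝ) ^ k := by
      rw [ENNReal.rpow_natCast] at h3
      have := h3.le
      rw [← ENNReal.coe_pow, ENNReal.coe_le_coe] at this
      exact_mod_cast this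
    have h5 : ‖(N ^ k) i j‖ = ‖(Nc ^ k) i j‖ := by
      rw [hmap k, Matrix.map_apply]
      simp [Complex.norm_real]
    rw [h5]
    exact (entry_le_linfty _ i j).trans h4
  exact Summable.of_norm_bounded_eventually_nat
    (summable_geometric_of_lt_one r.coe_nonneg hr2') hev2

end Gelfand

lemma pow_entry_nonneg {n : ℕ} {N : Matrix (Fin n) (Fin n) ℝ} (hN : ∀ i j, 0 ≤ N i j) :
    ∀ (k : ℕ) (i j : Fin n), 0 ≤ (N ^ k) i j := by
  intro k
  induction k with
  | zero =>
    intro i j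
    rw [pow_zero]
    by_cases h : i = j <;> simp [Matrix.one_apply, h]
  | succ k ih =>
    intro i j
    rw [pow_succ, Matrix.mul_apply]
    exact Finset.sum_nonneg fun l _ => mul_nonneg (ih i l) (hN l j)

lemma pow_entry_mono {n : ℕ} {A Q : Matrix (Fin n) (Fin n) ℝ} (hA : ∀ i j, 0 ≤ A i j)
    (hAQ : ∀ i j, A i j ≤ Q i j) :
    ∀ (k : ℕ) (i j : Fin n), (A ^ k) i j ≤ (Q ^ k) i j := by
  intro k
  induction k with
  | zero => intro i j; rw [pow_zero, pow_zero]
  | succ k ih =>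
    intro i j
    rw [pow_succ, pow_succ, Matrix.mul_apply, Matrix.mul_apply]
    refine Finset.sum_le_sum fun l _ => ?_
    exact mul_le_mul (ih i l) (hAQ l j) (hA l j) (le_trans (pow_entry_nonneg hA k i l) (ih i l))

lemma neumann {n : ℕ} (N : Matrix (Fin n) (Fin n) ℝ) (hρ : specRad N < 1) :
    ∃ S : Matrix (Fin n) (Fin n) ℝ,
      N * S = S - 1 ∧ S * N = S - 1 ∧ (1 - N)⁻¹ = S ∧
      ∀ i j, S i j = ∑' k, (N ^ k) i j := by
  have hsum := summable_pow_entries N hρ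
  have hNS : N * (Matrix.of fun i j => ∑' k, (N ^ k) i j) = (Matrix.of fun i j => ∑' k, (N ^ k) i j) - 1 := by
    ext i j
    rw [Matrix.mul_apply]
    have e1 : ∀ l ∈ univ, Summable fun k => N i l * (N ^ k) l j :=
      fun l _ => (hsum l j).mul_left _
    calc ∑ l, N i l * (Matrix.of fun i j => ∑' k, (N ^ k) i j) l j
        = ∑ l, ∑' k, N i l * (N ^ k) l j := by
          refine Finset.sum_congr rfl fun l _ => ?_
          exact (tsum_mul_left).symm
      _ = ∑' k, ∑ l, N i l * (N ^ k) l j := (Summable.tsum_finsetSum e1).symm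
      _ = ∑' k, (N ^ (k + 1)) i j := by
          refine tsum_congr fun k => ?_
          rw [pow_succ', Matrix.mul_apply]
      _ = (∑' k, (N ^ k) i j) - (N ^ 0) i j := by
          rw [Summable.tsum_eq_zero_add (hsum i j)]; ring
      _ = _ := by simp [Matrix.sub_apply]
  have hSN : (Matrix.of fun i j => ∑' k, (N ^ k) i j) * N = (Matrix.of fun i j => ∑' k, (N ^ k) i j) - 1 := by
    ext i j
    rw [Matrix.mul_apply]
    have e1 : ∀ l ∈ univ, Summable fun k => (N ^ k) i l * N l j :=
      fun l _ => (hsum i l).mul_right _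
    calc ∑ l, (Matrix.of fun i j => ∑' k, (N ^ k) i j) i l * N l j
        = ∑ l, ∑' k, (N ^ k) i l * N l j := by
          refine Finset.sum_congr rfl fun l _ => ?_
          exact (tsum_mul_right).symm
      _ = ∑' k, ∑ l, (N ^ k) i l * N l j := (Summable.tsum_finsetSum e1).symm
      _ = ∑' k, (N ^ (k + 1)) i j := by
          refine tsum_congr fun k => ?_
          rw [pow_succ, Matrix.mul_apply]
      _ = (∑' k, (N ^ k) i j) - (N ^ 0) i j := by
          rw [Summable.tsum_eq_zero_add (hsum i j)]; ring
      _ = _ := by simp [Matrix.sub_apply]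
  have h1 : (1 - N) * (Matrix.of fun i j => ∑' k, (N ^ k) i j) = 1 := by
    rw [Matrix.sub_mul, Matrix.one_mul, hNS, sub_sub_cancel]
  exact ⟨_, hNS, hSN, Matrix.inv_eq_right_inv h1, fun i j => rfl⟩

lemma mulVec_entry_nonneg {n : ℕ} {N : Matrix (Fin n) (Fin n) ℝ} (hN : ∀ i j, 0 ≤ N i j)
    {x : Fin n → ℝ} (hx : ∀ j, 0 ≤ x j) (i : Fin n) : 0 ≤ N.mulVec x i := by
  simp only [Matrix.mulVec, dotProduct]
  exact Finset.sum_nonneg fun j _ => mul_nonneg (hN i j) (hx j)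

lemma mulVec_entry_pos {n : ℕ} {N : Matrix (Fin n) (Fin n) ℝ} (hN : ∀ i j, 0 ≤ N i j)
    {x : Fin n → ℝ} (hx : ∀ j, 0 ≤ x j) {i j₀ : Fin n} (hNij : 0 < N i j₀) (hxj : 0 < x j₀) :
    0 < N.mulVec x i := by
  simp only [Matrix.mulVec, dotProduct]
  exact Finset.sum_pos' (fun j _ => mul_nonneg (hN i j) (hx j))
    ⟨j₀, mem_univ j₀, mul_pos hNij hxj⟩

lemma exists_subinv {n : ℕ} (N : Matrix (Fin n) (Fin n) ℝ) (hN : ∀ i j, 0 ≤ N i j)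
    (hρ : specRad N < 1) : ∃ v : Fin n → ℝ, (∀ i, 0 < v i) ∧ ∀ i, N.mulVec v i < v i := by
  obtain ⟨S, hNS, hSN, hinv, hSdef⟩ := neumann N hρ
  have hsum := summable_pow_entries N hρ
  have hS0 : ∀ i j, 0 ≤ S i j := fun i j => by
    rw [hSdef]; exact tsum_nonneg fun k => pow_entry_nonneg hN k i j
  have hSdiag : ∀ i, 1 ≤ S i i := fun i => by
    have h1 : (N ^ 0) i i ≤ S i i := by
      rw [hSdef]; exact Summable.le_tsum (hsum i i) 0 fun k _ => pow_entry_nonneg hN k i i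
    simpa using h1
  refine ⟨S.mulVec (fun _ => 1), fun i => ?_, fun i => ?_⟩
  · have h1 : S i i * 1 ≤ S.mulVec (fun _ => 1) i := by
      simp only [Matrix.mulVec, dotProduct]
      exact Finset.single_le_sum (f := fun j => S i j * 1)
        (fun j _ => mul_nonneg (hS0 i j) zero_le_one) (mem_univ i)
    have := hSdiag i
    nlinarith
  · rw [Matrix.mulVec_mulVec, hNS, Matrix.sub_mulVec, Matrix.one_mulVec]
    simp only [Pi.sub_apply]
    linarith [hSdiag i, (by norm_num : (0:ℝ) < 1)]

/-- Spectral equivalence: with `M₀ = L(I−A)⁻¹B`, there is `h > 0` with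
`M₀ h < h` iff there is `u > 0` with `(A + BL) u < u`; consequently
`ρ(M₀) < 1 ↔ ρ(A + BL) < 1`. -/
theorem spectral_equivalence {n : ℕ} (A B : Matrix (Fin n) (Fin n) ℝ)
    (l : Fin n → ℝ)
    (hA : ∀ i j, 0 ≤ A i j) (hirr : MatIrreducible A) (hρ : specRad A < 1)
    (hl : ∀ i, 0 < l i)
    (hB : ∀ i j, 0 ≤ B i j) (hBcol : ∀ j, ∃ i, 0 < B i j) :
    letI L := Matrix.diagonal l
    letI M₀ := L * (1 - A)⁻¹ * B
    ((∃ h : Fin n → ℝ, (∀ i, 0 < h i) ∧ ∀ i, M₀.mulVec h i < h i) ↔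
      (∃ u : Fin n → ℝ, (∀ i, 0 < u i) ∧ ∀ i, (A + B * L).mulVec u i < u i)) ∧
    (specRad M₀ < 1 ↔ specRad (A + B * L) < 1) := by
  rcases Nat.eq_zero_or_pos n with hn | hn
  · subst hn
    have hz : ∀ M : Matrix (Fin 0) (Fin 0) ℝ, specRad M < 1 := fun M =>
      specRad_lt_one_of_sub M (fun i => i.elim0) (fun _ => 1) (fun i => i.elim0)
        (fun i => i.elim0)
    exact ⟨⟨fun _ => ⟨fun _ => 1, fun i => i.elim0, fun i => i.elim0⟩,
      fun _ => ⟨fun _ => 1, fun i => i.elim0, fun i => i.elim0⟩⟩,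
      by simp [hz]⟩
  · obtain ⟨S, hNS, hSN, hinv, hSdef⟩ := neumann A hρ
    have hsum := summable_pow_entries A hρ
    set Ld := Matrix.diagonal l with hLd
    set M₀ := Ld * (1 - A)⁻¹ * B with hM₀def
    set Q := A + B * Ld with hQdef
    have hM₀ : M₀ = Ld * S * B := by rw [hM₀def, hinv]
    have hS0 : ∀ i j, 0 ≤ S i j := fun i j => by
      rw [hSdef]; exact tsum_nonneg fun k => pow_entry_nonneg hA k i j
    have hSpos : ∀ i j, 0 < S i j := fun i j => by
      obtain ⟨k, hk, hpos⟩ := hirr i j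
      refine lt_of_lt_of_le hpos ?_
      rw [hSdef]
      exact Summable.le_tsum (hsum i j) k fun m _ => pow_entry_nonneg hA m i j
    have hLd0 : ∀ i j, 0 ≤ Ld i j := fun i j => by
      rw [hLd]
      rcases eq_or_ne i j with h | h
      · subst h; simp [Matrix.diagonal_apply_eq]; exact (hl i).le
      · simp [Matrix.diagonal_apply_ne _ h]
    have hM₀0 : ∀ i j, 0 ≤ M₀ i j := fun i j => by
      rw [hM₀, Matrix.mul_apply]
      refine Finset.sum_nonneg fun k _ => mul_nonneg ?_ (hB k j)
      rw [Matrix.mul_apply]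
      exact Finset.sum_nonneg fun m _ => mul_nonneg (hLd0 i m) (hS0 m k)
    have hQ0 : ∀ i j, 0 ≤ Q i j := fun i j => by
      rw [hQdef]
      simp only [Matrix.add_apply]
      refine add_nonneg (hA i j) ?_
      rw [hLd, Matrix.mul_diagonal]
      exact mul_nonneg (hB i j) (hl j).le
    have hAQ : ∀ i j, A i j ≤ Q i j := fun i j => by
      have := hQ0 i j
      rw [hQdef]
      simp only [Matrix.add_apply]
      rw [hLd, Matrix.mul_diagonal]
      nlinarith [mul_nonneg (hB i j) (hl j).le]
    have hQirr : ∀ i j, ∃ k : ℕ, 0 < k ∧ 0 < (Q ^ k) i j := fun i j => by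
      obtain ⟨k, hk, hpos⟩ := hirr i j
      exact ⟨k, hk, lt_of_lt_of_le hpos (pow_entry_mono hA hAQ k i j)⟩
    have hSmul : S * (1 - A) = 1 := by
      rw [Matrix.mul_sub, Matrix.mul_one, hSN, sub_sub_cancel]
    have hmulS : (1 - A) * S = 1 := by
      rw [Matrix.sub_mul, Matrix.one_mul, hNS, sub_sub_cancel]
    -- the equivalence of vector conditions
    have hiff : (∃ h : Fin n → ℝ, (∀ i, 0 < h i) ∧ ∀ i, M₀.mulVec h i < h i) ↔
        (∃ u : Fin n → ℝ, (∀ i, 0 < u i) ∧ ∀ i, Q.mulVec u i < u i) := by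
      constructor
      · rintro ⟨h, hpos, hlt⟩
        set Bh := B.mulVec h with hBh
        set u₀ := S.mulVec Bh with hu₀
        set d := fun i => h i - M₀.mulVec h i with hd
        have hdpos : ∀ i, 0 < d i := fun i => sub_pos.mpr (hlt i)
        have hBh0 : ∀ i, 0 ≤ Bh i := fun i => mulVec_entry_nonneg hB (fun j => (hpos j).le) i
        obtain ⟨i₁, hi₁⟩ := hBcol ⟨0, hn⟩
        have hBh1 : 0 < Bh i₁ := mulVec_entry_pos hB (fun j => (hpos j).le) hi₁ (hpos _)
        have hu₀pos : ∀ i, 0 < u₀ i := fun i =>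
          mulVec_entry_pos hS0 hBh0 (hSpos i i₁) hBh1
        set w := B.mulVec d with hw
        have hw0 : ∀ i, 0 ≤ w i := fun i => mulVec_entry_nonneg hB (fun j => (hdpos j).le) i
        obtain ⟨j₁, hj₁B⟩ := hBcol ⟨0, hn⟩
        have hwpos : 0 < w j₁ := mulVec_entry_pos hB (fun j => (hdpos j).le) hj₁B (hdpos _)
        -- Q u₀ = u₀ - w
        have hQu₀ : Q.mulVec u₀ = u₀ - w := by
          rw [hQdef, Matrix.add_mulVec]
          have e1 : A.mulVec u₀ = u₀ - Bh := by
            rw [hu₀, Matrix.mulVec_mulVec, hNS, Matrix.sub_mulVec, Matrix.one_mulVec, ← hu₀]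
          have e2 : (B * Ld).mulVec u₀ = B.mulVec (M₀.mulVec h) := by
            rw [← Matrix.mulVec_mulVec]
            congr 1
            rw [hM₀, ← Matrix.mulVec_mulVec, ← Matrix.mulVec_mulVec, ← hBh, ← hu₀]
          rw [e1, e2]
          have e3 : M₀.mulVec h = fun i => h i - d i := by funext i; rw [hd]; ring
          rw [e3, hw]
          have e4 : B.mulVec (fun i => h i - d i) = Bh - B.mulVec d := by
            rw [hBh, ← Matrix.mulVec_sub]; rfl
          rw [e4]
          funext i
          simp only [Pi.sub_apply, Pi.add_apply]
          ring
        -- choose K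
        have hchoice : ∀ i : Fin n, ∃ k : ℕ, 0 < (Q ^ k) i j₁ := fun i =>
          (hQirr i j₁).imp fun k hk => hk.2
        choose kk hkk using hchoice
        set K := univ.sup kk with hK
        set g : ℕ → (Fin n → ℝ) := fun k => (Q ^ k).mulVec u₀ with hg
        have hgdef : ∀ k, g k = (Q ^ k).mulVec u₀ := fun k => rfl
        have hg0 : ∀ k i, 0 ≤ g k i := fun k i =>
          mulVec_entry_nonneg (pow_entry_nonneg hQ0 k) (fun j => (hu₀pos j).le) i
        have htel : ∑ k ∈ range (K + 1), (Q ^ k).mulVec w = u₀ - g (K + 1) := by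
          have e5 : ∀ k : ℕ, (Q ^ k).mulVec w = g k - g (k + 1) := fun k => by
            have hwu : w = u₀ - Q.mulVec u₀ := by rw [hQu₀]; abel
            rw [hgdef, hgdef, hwu, Matrix.mulVec_sub, pow_succ, ← Matrix.mulVec_mulVec]
          calc ∑ k ∈ range (K + 1), (Q ^ k).mulVec w
              = ∑ k ∈ range (K + 1), (g k - g (k + 1)) := by
                exact Finset.sum_congr rfl fun k _ => e5 k
            _ = g 0 - g (K + 1) := Finset.sum_range_sub' g (K + 1)
            _ = u₀ - g (K + 1) := by rw [hgdef 0]; simp [Matrix.one_mulVec]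
        have hspos : ∀ i, 0 < (∑ k ∈ range (K + 1), (Q ^ k).mulVec w) i := fun i => by
          have hmem : kk i ∈ range (K + 1) := mem_range.mpr (Nat.lt_succ_of_le (le_sup (mem_univ i)))
          have hterm : 0 < ((Q ^ kk i).mulVec w) i :=
            mulVec_entry_pos (pow_entry_nonneg hQ0 _) hw0 (hkk i) hwpos
          have : (∑ k ∈ range (K + 1), (Q ^ k).mulVec w) i
              = ∑ k ∈ range (K + 1), ((Q ^ k).mulVec w) i := by
            simp [Finset.sum_apply]
          rw [this]
          exact Finset.sum_pos' (fun k _ => mulVec_entry_nonneg (pow_entry_nonneg hQ0 k) hw0 i)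
            ⟨kk i, hmem, hterm⟩
        have hstrict : ∀ i, g (K + 1) i < u₀ i := fun i => by
          have := hspos i
          rw [htel] at this
          simpa [sub_pos] using this
        -- v
        set v := ∑ k ∈ range (K + 1), g k with hv
        have hvpos : ∀ i, 0 < v i := fun i => by
          have h0mem : (0:ℕ) ∈ range (K + 1) := mem_range.mpr (Nat.succ_pos K)
          have hle : g 0 i ≤ v i := by
            rw [hv]
            have : v i = ∑ k ∈ range (K + 1), g k i := by rw [hv]; simp [Finset.sum_apply]
            rw [← hv, this]
            exact Finset.single_le_sum (f := fun k => g k i) (fun k _ => hg0 k i) h0mem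
          have hg0i : g 0 i = u₀ i := by rw [hgdef 0]; simp [Matrix.one_mulVec]
          rw [hg0i] at hle
          exact lt_of_lt_of_le (hu₀pos i) hle
        refine ⟨v, hvpos, fun i => ?_⟩
        have hQv : Q.mulVec v = ∑ k ∈ range (K + 1), g (k + 1) := by
          rw [hv]
          have : Q.mulVec (∑ k ∈ range (K + 1), g k)
              = ∑ k ∈ range (K + 1), Q.mulVec (g k) := by
            simp only [← Matrix.mulVecLin_apply]
            exact map_sum (Q.mulVecLin) g (range (K + 1))
          rw [this]
          refine Finset.sum_congr rfl fun k _ => ?_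
          rw [hgdef, hgdef, pow_succ', ← Matrix.mulVec_mulVec]
        have hsum' : ∑ k ∈ range (K + 1), g (k + 1) = v + g (K + 1) - g 0 := by
          have := Finset.sum_range_succ' g (K + 1)
          -- this : ∑ k in range (K+2), g k = ∑ k in range (K+1), g (k+1) + g 0
          have h2 : ∑ k ∈ range (K + 2), g k = v + g (K + 1) := by
            rw [hv, Finset.sum_range_succ]
          rw [h2] at this
          linear_combination (norm := abel) -this
        rw [hQv, hsum']
        have hg00 : g 0 = u₀ := by rw [hgdef 0]; simp [Matrix.one_mulVec]
        simp only [Pi.sub_apply, Pi.add_apply, hg00]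
        have := hstrict i
        linarith
      · rintro ⟨u, hupos, hult⟩
        set h := Ld.mulVec u with hh
        have hhval : ∀ i, h i = l i * u i := fun i => by
          rw [hh, hLd]; exact Matrix.mulVec_diagonal l u i
        have hhpos : ∀ i, 0 < h i := fun i => by
          rw [hhval]; exact mul_pos (hl i) (hupos i)
        set e := fun i => u i - Q.mulVec u i with he
        have hepos : ∀ i, 0 < e i := fun i => sub_pos.mpr (hult i)
        have hBLd : (B * Ld).mulVec u = B.mulVec h := by
          rw [← Matrix.mulVec_mulVec, hh]
        have hBh : B.mulVec h = (1 - A).mulVec u - e := by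
          have e1 : Q.mulVec u = A.mulVec u + (B * Ld).mulVec u := by
            rw [hQdef, Matrix.add_mulVec]
          have e2 : Q.mulVec u = fun i => u i - e i := by funext i; rw [he]; ring
          rw [← hBLd]
          funext i
          have := congrFun e1 i
          have := congrFun e2 i
          simp only [Pi.sub_apply, Pi.add_apply] at *
          rw [Matrix.sub_mulVec, Matrix.one_mulVec]
          simp only [Pi.sub_apply]
          linarith
        have hM₀h : M₀.mulVec h = Ld.mulVec (u - S.mulVec e) := by
          rw [hM₀, ← Matrix.mulVec_mulVec, ← Matrix.mulVec_mulVec, hBh,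
            Matrix.mulVec_sub, Matrix.mulVec_mulVec, hSmul, Matrix.one_mulVec]
        have hSe : ∀ i, 0 < S.mulVec e i := fun i =>
          mulVec_entry_pos hS0 (fun j => (hepos j).le) (hSpos i ⟨0, hn⟩) (hepos _)
        refine ⟨h, hhpos, fun i => ?_⟩
        rw [hM₀h]
        have : Ld.mulVec (u - S.mulVec e) i = l i * (u i - S.mulVec e i) := by
          rw [hLd]; exact Matrix.mulVec_diagonal l _ i
        rw [this, hhval i]
        have := hSe i
        nlinarith [hl i, hupos i]
    refine ⟨hiff, ?_, ?_⟩
    · intro h1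
      obtain ⟨u, hupos, hult⟩ := hiff.mp (exists_subinv M₀ hM₀0 h1)
      exact specRad_lt_one_of_sub Q hQ0 u hupos hult
    · intro h1
      obtain ⟨h, hpos, hlt⟩ := hiff.mpr (exists_subinv Q hQ0 h1)
      exact specRad_lt_one_of_sub M₀ hM₀0 h hpos hlt
end

section
/- Let M be a strictly positive n×n matrix with Perron eigenvalue λ* < 1 and normalized positive left eigenvector y* (with y*_1 = 1). Then y* lies in the interior of Θ = {c > 0 : c_1 = 1, c^T(I−M) ≥ 0}, and y* is the unique element of Θ for which the ratios (c_j − (c^T M)_j)/(c^T M)_j are equal across all j; the common value equals (1−λ*)/λ*. -/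
open Matrix

lemma perron_compare {n : ℕ} [NeZero n] (M : Matrix (Fin n) (Fin n) ℝ)
    (hM : ∀ i j, 0 < M i j) {u v : Fin n → ℝ} {α β : ℝ}
    (hu : ∀ i, 0 < u i) (hv : ∀ i, 0 < v i)
    (hue : Matrix.vecMul u M = α • u) (hve : Matrix.vecMul v M = β • v) :
    (∃ t : ℝ, 0 < t ∧ u = t • v) ∨ β < α := by
  classical
  obtain ⟨j0, -, hj0⟩ := Finset.exists_min_image Finset.univ (fun j => u j / v j)
    ⟨0, Finset.mem_univ 0⟩
  set t := u j0 / v j0 with ht_def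
  have ht : 0 < t := div_pos (hu j0) (hv j0)
  have hle : ∀ j, t * v j ≤ u j := fun j => by
    have h := hj0 j (Finset.mem_univ j)
    have := (le_div_iff₀ (hv j)).mp h
    linarith
  have htj0 : u j0 = t * v j0 := (div_mul_cancel₀ _ (hv j0).ne').symm
  by_cases hcase : ∀ j, u j = t * v j
  · exact Or.inl ⟨t, ht, funext fun j => by simp [hcase j]⟩
  · right
    push_neg at hcase
    obtain ⟨j1, hj1⟩ := hcase
    have hj1' : t * v j1 < u j1 := lt_of_le_of_ne (hle j1) (fun h => hj1 h.symm)
    have hsum : 0 < ∑ i, (u i - t * v i) * M i j0 := by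
      apply Finset.sum_pos' (fun i _ => mul_nonneg (by linarith [hle i]) (hM i j0).le)
      exact ⟨j1, Finset.mem_univ j1, mul_pos (by linarith) (hM j1 j0)⟩
    have hval : ∑ i, (u i - t * v i) * M i j0 = α * u j0 - t * (β * v j0) := by
      have h1 : ∑ i, u i * M i j0 = α * u j0 := by
        have := congrFun hue j0
        simpa [Matrix.vecMul, dotProduct] using this
      have h2 : ∑ i, v i * M i j0 = β * v j0 := by
        have := congrFun hve j0
        simpa [Matrix.vecMul, dotProduct] using this
      calc ∑ i, (u i - t * v i) * M i j0
          = ∑ i, (u i * M i j0 - t * (v i * M i j0)) := by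
            apply Finset.sum_congr rfl; intro i _; ring
        _ = (∑ i, u i * M i j0) - t * ∑ i, v i * M i j0 := by
            rw [Finset.sum_sub_distrib, Finset.mul_sum]
        _ = α * u j0 - t * (β * v j0) := by rw [h1, h2]
    rw [hval, htj0] at hsum
    have hv0 : 0 < t * v j0 := mul_pos ht (hv j0)
    nlinarith

/-- Equal-exploitation point: if `M` is strictly positive with Perron
eigenvalue `lam < 1` and normalized positive left eigenvector `y` (`y₀ = 1`),
then `y` is strictly feasible (interior of `Θ`), it is the unique element of
`Θ` equalizing exploitation rates across sectors, and the common rate is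
`(1 − lam)/lam`. -/
theorem equal_exploitation_point {n : ℕ} [NeZero n]
    (M : Matrix (Fin n) (Fin n) ℝ) (lam : ℝ) (y : Fin n → ℝ)
    (hM : ∀ i j, 0 < M i j)
    (hy : ∀ i, 0 < y i) (hy1 : y 0 = 1)
    (heig : Matrix.vecMul y M = lam • y)
    (hlam : lam < 1) :
    letI Θ : Set (Fin n → ℝ) :=
      {c | (∀ i, 0 < c i) ∧ c 0 = 1 ∧ ∀ j, 0 ≤ Matrix.vecMul c (1 - M) j}
    (∀ j, 0 < Matrix.vecMul y (1 - M) j) ∧ y ∈ Θ ∧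
    (∀ j, (y j - Matrix.vecMul y M j) / Matrix.vecMul y M j = (1 - lam) / lam) ∧
    (∀ c ∈ Θ, ∀ e : ℝ,
        (∀ j, (c j - Matrix.vecMul c M j) / Matrix.vecMul c M j = e) → c = y) := by
  have hyM : ∀ j, Matrix.vecMul y M j = lam * y j := by
    intro j; rw [heig]; simp
  have hlam0 : 0 < lam := by
    have h0 : 0 < Matrix.vecMul y M 0 := by
      rw [show Matrix.vecMul y M 0 = ∑ i, y i * M i 0 by
        simp [Matrix.vecMul, dotProduct]]
      exact Finset.sum_pos (fun i _ => mul_pos (hy i) (hM i 0)) Finset.univ_nonempty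
    have := hyM 0
    rw [hy1] at this
    linarith [h0, this ▸ h0]
  have hsub : ∀ j, Matrix.vecMul y (1 - M) j = (1 - lam) * y j := by
    intro j
    rw [Matrix.vecMul_sub, Matrix.vecMul_one]
    simp [hyM j]; ring
  have hpos : ∀ j, 0 < Matrix.vecMul y (1 - M) j := fun j =>
    (hsub j) ▸ mul_pos (by linarith) (hy j)
  refine ⟨hpos, ⟨hy, hy1, fun j => (hpos j).le⟩, ?_, ?_⟩
  · intro j
    rw [hyM j]
    rw [show y j - lam * y j = (1 - lam) * y j by ring]
    rw [mul_comm (1-lam) (y j), mul_comm lam (y j), mul_div_mul_left _ _ (hy j).ne']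
  · rintro c ⟨hc, hc1, hcfeas⟩ e he
    have hcM : ∀ j, 0 < Matrix.vecMul c M j := by
      intro j
      rw [show Matrix.vecMul c M j = ∑ i, c i * M i j by
        simp [Matrix.vecMul, dotProduct]]
      exact Finset.sum_pos (fun i _ => mul_pos (hc i) (hM i j)) Finset.univ_nonempty
    have hkey : ∀ j, c j = (1 + e) * Matrix.vecMul c M j := by
      intro j
      have h := (div_eq_iff (hcM j).ne').mp (he j)
      linarith
    have h1e : 0 < 1 + e := by
      have := hkey 0
      nlinarith [hc 0, hcM 0]
    have hceig : Matrix.vecMul c M = (1 + e)⁻¹ • c := by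
      funext j
      rw [Pi.smul_apply, smul_eq_mul, hkey j]
      field_simp
    rcases perron_compare M hM hc hy hceig heig with ⟨t, ht, hct⟩ | hlt
    · have ht1 : t = 1 := by
        have := congrFun hct 0
        simp [hy1, hc1] at this
        linarith
      rw [hct, ht1, one_smul]
    · exfalso
      rcases perron_compare M hM hy hc heig hceig with ⟨t, ht, hyt⟩ | hlt2
      ·
        have : lam • y = Matrix.vecMul y M := heig.symm
        rw [hyt] at heig
        rw [Matrix.smul_vecMul, hceig] at heig
        have := congrFun heig 0
        simp [hc1, smul_smul] at this
        have hne : (1:ℝ) + e ≠ 0 := ne_of_gt h1e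
        -- t * (1+e)⁻¹ = lam * t ⇒ (1+e)⁻¹ = lam, contradicting hlt
        have : (1 + e)⁻¹ = lam := by
          field_simp at this ⊢
          nlinarith [this]
        rw [this] at hlt
        exact lt_irrefl lam hlt
      · exact lt_asymm hlt hlt2
end

section
/- Let v_1, v_2 ∈ R^n be strictly positive vectors with n ≥ 2, and let P, Π > 0 be reals. If min_i (v_2)_i/(v_1)_i < Π/P < max_i (v_2)_i/(v_1)_i, then there exists a strictly positive vector q with q^T v_1 = P and q^T v_2 = Π. -/
open Matrix

/-- If the ratio `Π/P` lies strictly between the min and max of the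
componentwise ratios `(v₂)ᵢ/(v₁)ᵢ` of two strictly positive vectors, then
there is a strictly positive `q` with `qᵀv₁ = P` and `qᵀv₂ = Π`. -/
theorem positive_solution_of_two_equalities {n : ℕ} (hn : 2 ≤ n)
    (v₁ v₂ : Fin n → ℝ) (P Pi : ℝ)
    (hv₁ : ∀ i, 0 < v₁ i) (hv₂ : ∀ i, 0 < v₂ i)
    (hP : 0 < P) (hPi : 0 < Pi)
    (hlow : ∃ i, v₂ i / v₁ i < Pi / P)
    (hhigh : ∃ i, Pi / P < v₂ i / v₁ i) :
    ∃ q : Fin n → ℝ, (∀ i, 0 < q i) ∧ q ⬝ᵥ v₁ = P ∧ q ⬝ᵥ v₂ = Pi := by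
  obtain ⟨i, hi⟩ := hlow
  obtain ⟨j, hj⟩ := hhigh
  have hij : i ≠ j := by
    intro h; rw [h] at hi; exact absurd (hi.trans hj) (lt_irrefl _)
  -- basic inequalities
  have hB : v₂ i * P < Pi * v₁ i := by
    have := (div_lt_div_iff₀ (hv₁ i) hP).mp hi; linarith
  have hA : Pi * v₁ j < v₂ j * P := by
    have := (div_lt_div_iff₀ hP (hv₁ j)).mp hj; linarith
  have hD : 0 < v₁ i * v₂ j - v₂ i * v₁ j := by
    have h1 : v₂ i / v₁ i < v₂ j / v₁ j := hi.trans hj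
    have := (div_lt_div_iff₀ (hv₁ i) (hv₁ j)).mp h1
    nlinarith
  set D : ℝ := v₁ i * v₂ j - v₂ i * v₁ j with hDdef
  set S₁ : ℝ := ∑ k ∈ Finset.univ \ {i, j}, v₁ k with hS₁
  set S₂ : ℝ := ∑ k ∈ Finset.univ \ {i, j}, v₂ k with hS₂
  set A : ℝ := v₂ j * P - v₁ j * Pi with hAdef
  set B : ℝ := v₁ i * Pi - v₂ i * P with hBdef
  have hApos : 0 < A := by simp only [hAdef]; linarith
  have hBpos : 0 < B := by simp only [hBdef]; linarith
  set C₁ : ℝ := v₂ j * S₁ - v₁ j * S₂ with hC₁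
  set C₂ : ℝ := v₁ i * S₂ - v₂ i * S₁ with hC₂
  set ε : ℝ := min (A / (2 * (|C₁| + 1))) (min (B / (2 * (|C₂| + 1))) 1) with hε
  have hd1 : (0:ℝ) < 2 * (|C₁| + 1) := by positivity
  have hd2 : (0:ℝ) < 2 * (|C₂| + 1) := by positivity
  have hεpos : 0 < ε := by
    apply lt_min (by positivity) (lt_min (by positivity) one_pos)
  have hεC₁ : ε * C₁ < A := by
    have h1 : ε ≤ A / (2 * (|C₁| + 1)) := min_le_left _ _
    have h2 : C₁ ≤ |C₁| := le_abs_self _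
    have h3 : 0 ≤ |C₁| := abs_nonneg _
    have h4 : ε * C₁ ≤ ε * |C₁| := mul_le_mul_of_nonneg_left h2 hεpos.le
    have h5 : ε * |C₁| ≤ A / (2 * (|C₁| + 1)) * |C₁| := mul_le_mul_of_nonneg_right h1 h3
    have h6 : A / (2 * (|C₁| + 1)) * |C₁| < A := by
      rw [div_mul_eq_mul_div, div_lt_iff₀ hd1]; nlinarith [hApos, h3]
    linarith
  have hεC₂ : ε * C₂ < B := by
    have h1 : ε ≤ B / (2 * (|C₂| + 1)) := le_trans (min_le_right _ _) (min_le_left _ _)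
    have h2 : C₂ ≤ |C₂| := le_abs_self _
    have h3 : 0 ≤ |C₂| := abs_nonneg _
    have h4 : ε * C₂ ≤ ε * |C₂| := mul_le_mul_of_nonneg_left h2 hεpos.le
    have h5 : ε * |C₂| ≤ B / (2 * (|C₂| + 1)) * |C₂| := mul_le_mul_of_nonneg_right h1 h3
    have h6 : B / (2 * (|C₂| + 1)) * |C₂| < B := by
      rw [div_mul_eq_mul_div, div_lt_iff₀ hd2]; nlinarith [hBpos, h3]
    linarith
  set P' : ℝ := P - ε * S₁ with hP'
  set Pi' : ℝ := Pi - ε * S₂ with hPi'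
  set a : ℝ := (v₂ j * P' - v₁ j * Pi') / D with ha
  set b : ℝ := (v₁ i * Pi' - v₂ i * P') / D with hb
  clear_value D S₁ S₂ A B C₁ C₂ ε P' Pi' a b
  have hanum : 0 < v₂ j * P' - v₁ j * Pi' := by
    simp only [hP', hPi']; simp only [hAdef, hC₁] at hApos hεC₁ ⊢
    ring_nf; ring_nf at hεC₁; linarith
  have hbnum : 0 < v₁ i * Pi' - v₂ i * P' := by
    simp only [hP', hPi']; simp only [hBdef, hC₂] at hBpos hεC₂ ⊢
    ring_nf; ring_nf at hεC₂; linarith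
  have hapos : 0 < a := by rw [ha]; exact div_pos hanum hD
  have hbpos : 0 < b := by rw [hb]; exact div_pos hbnum hD
  refine ⟨fun k => if k = i then a else if k = j then b else ε, ?_, ?_, ?_⟩
  · intro k
    by_cases h1 : k = i
    · simpa [h1] using hapos
    · by_cases h2 : k = j
      · simpa [h1, h2, hij.symm] using hbpos
      · simpa [h1, h2] using hεpos
  all_goals {
    have hsub : ({i, j} : Finset (Fin n)) ⊆ Finset.univ := Finset.subset_univ _
    rw [dotProduct, ← Finset.sum_sdiff hsub, Finset.sum_pair hij]
    have hrest : ∀ w : Fin n → ℝ,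
        ∑ k ∈ Finset.univ \ {i, j}, (if k = i then a else if k = j then b else ε) * w k
        = ε * ∑ k ∈ Finset.univ \ {i, j}, w k := by
      intro w
      rw [Finset.mul_sum]
      apply Finset.sum_congr rfl
      intro k hk
      simp only [Finset.mem_sdiff, Finset.mem_insert, Finset.mem_singleton] at hk
      push_neg at hk
      rw [if_neg hk.2.1, if_neg hk.2.2]
    rw [hrest]
    simp only [if_pos rfl, if_neg hij.symm, if_neg hij, eq_self_iff_true, if_true]
    simp only [ha, hb, ← hS₁, ← hS₂]
    have hDne : D ≠ 0 := ne_of_gt hD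
    field_simp
    simp only [hDdef, hP', hPi']
    ring }
end
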